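/- For a binary linear code C of length n and any i with 0 ≤ i ≤ n/2, the number of zero neighbors of weight 2i in the extended code C_ex equals L_{2i-1}(C) + L_{2i}(C) + N_{2i}(C), where L_w(C) is the number of zero neighbors of weight w in C and N_{2i}(C) is the number of only-odd-decomposable codewords of weight 2i in C. -/

import Mathlib

open Finset

/-- Support of a binary vector: the set of nonzero coordinates. -/
def supp {n : ℕ} (v : Fin n → ZMod 2) : Finset (Fin n) :=
  Finset.univ.filter fun i => v i ≠ 0

/-- Hamming weight. -/
def wt {n : ℕ} (v : Fin n → ZMod 2) : ℕ := (supp v).card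

/-- A nonzero codeword of `D` is a zero neighbor (minimal codeword) if no nonzero
codeword of `D` has support strictly contained in its support. -/
def IsZeroNeighbor {n : ℕ} (D : Set (Fin n → ZMod 2)) (v : Fin n → ZMod 2) : Prop :=
  v ∈ D ∧ v ≠ 0 ∧ ∀ v' ∈ D, v' ≠ 0 → ¬ supp v' ⊂ supp v

/-- `v` is decomposable in `D` if it is the sum of two nonzero codewords of `D`
with disjoint supports. -/
def Decomposable {n : ℕ} (D : Set (Fin n → ZMod 2)) (v : Fin n → ZMod 2) : Prop :=
  ∃ v1 v2, v1 ∈ D ∧ v2 ∈ D ∧ v1 ≠ 0 ∧ v2 ≠ 0 ∧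
    Disjoint (supp v1) (supp v2) ∧ v = v1 + v2

/-- Extension of a vector by its overall parity bit. -/
def extVec {n : ℕ} (v : Fin n → ZMod 2) : Fin (n + 1) → ZMod 2 :=
  Fin.snoc v (∑ i, v i)

/-- The extended code. -/
def extCode {n : ℕ} (C : Submodule (ZMod 2) (Fin n → ZMod 2)) :
    Set (Fin (n + 1) → ZMod 2) :=
  extVec '' (C : Set (Fin n → ZMod 2))

/-- An even-weight codeword is only-odd-decomposable if it is decomposable and in every
decomposition into nonzero disjoint-support codewords both parts have odd weight. -/
def OnlyOddDecomposable {n : ℕ} (C : Submodule (ZMod 2) (Fin n → ZMod 2))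
    (v : Fin n → ZMod 2) : Prop :=
  Even (wt v) ∧ Decomposable (C : Set (Fin n → ZMod 2)) v ∧
    ∀ v1 v2, v1 ∈ C → v2 ∈ C → v1 ≠ 0 → v2 ≠ 0 →
      Disjoint (supp v1) (supp v2) → v = v1 + v2 → Odd (wt v1) ∧ Odd (wt v2)

/-- `L_w(D)`: the number of zero neighbors of weight `w` in `D`. -/
noncomputable def Lw {n : ℕ} (D : Set (Fin n → ZMod 2)) (w : ℕ) : ℕ :=
  {v : Fin n → ZMod 2 | IsZeroNeighbor D v ∧ wt v = w}.ncard

/-- `N_w(C)`: the number of only-odd-decomposable codewords of weight `w` in `C`. -/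
noncomputable def Nw {n : ℕ} (C : Submodule (ZMod 2) (Fin n → ZMod 2)) (w : ℕ) : ℕ :=
  {v : Fin n → ZMod 2 | v ∈ C ∧ OnlyOddDecomposable C v ∧ wt v = w}.ncard

/-- Action of a coordinate permutation on a vector. -/
def permVec {n : ℕ} (π : Equiv.Perm (Fin n)) (v : Fin n → ZMod 2) : Fin n → ZMod 2 :=
  v ∘ π.symm

/-- `π` is an automorphism of the code `D`. -/
def IsAut {n : ℕ} (D : Set (Fin n → ZMod 2)) (π : Equiv.Perm (Fin n)) : Prop :=
  permVec π '' D = D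

/-- The even weight subcode of `C`, as a set. -/
def evenSub {n : ℕ} (C : Submodule (ZMod 2) (Fin n → ZMod 2)) :
    Set (Fin n → ZMod 2) :=
  {v : Fin n → ZMod 2 | v ∈ C ∧ Even (wt v)}

/-! `extVec` identifies `C` with `C_ex`, and `supp (extVec u) ⊂ supp (extVec v)` holds iff
`supp u ⊂ supp v` and the parity bit of `u` does not exceed that of `v`. So `extVec v` is a
zero neighbor of `C_ex` iff every nonzero codeword of `C` strictly inside `supp v` is odd
while `v` is even. If there is no such codeword, `v` is a zero neighbor of `C`; otherwise any
one of them, `u`, splits `v = u + (v + u)` disjointly, and the condition says exactly that `v`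
is only-odd-decomposable. Weight `2i` in `C_ex` comes from weight `2i` or `2i - 1` in `C`. -/

open scoped symmDiff

section Support

variable {n : ℕ}

lemma mem_supp {v : Fin n → ZMod 2} {i : Fin n} : i ∈ supp v ↔ v i ≠ 0 := by
  simp [supp]

lemma supp_nonempty {v : Fin n → ZMod 2} : (supp v).Nonempty ↔ v ≠ 0 := by
  simp [Finset.Nonempty, mem_supp, funext_iff]

lemma wt_pos {v : Fin n → ZMod 2} : 0 < wt v ↔ v ≠ 0 :=
  Finset.card_pos.trans supp_nonempty

lemma sum_eq_wt (v : Fin n → ZMod 2) : ∑ i, v i = wt v := by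
  have h01 : ∀ a : ZMod 2, a = if a ≠ 0 then 1 else 0 := by decide
  rw [wt, supp, ← Finset.sum_boole]
  exact Finset.sum_congr rfl fun i _ => h01 (v i)

lemma supp_add (u v : Fin n → ZMod 2) : supp (u + v) = supp u ∆ supp v := by
  have hadd : ∀ a b : ZMod 2, a + b ≠ 0 ↔ a ≠ 0 ∧ ¬b ≠ 0 ∨ b ≠ 0 ∧ ¬a ≠ 0 := by decide
  ext i
  simp only [Finset.mem_symmDiff, mem_supp, Pi.add_apply, hadd]

lemma supp_ssubset_supp_add {u v : Fin n → ZMod 2} (h : Disjoint (supp u) (supp v))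
    (hv : v ≠ 0) : supp u ⊂ supp (u + v) := by
  obtain ⟨j, hj⟩ := supp_nonempty.2 hv
  rw [supp_add, h.symmDiff_eq_sup]
  exact left_lt_sup.2 fun hvu => Finset.disjoint_left.1 h (hvu hj) hj

lemma disjoint_split_of_supp_ssubset {u v : Fin n → ZMod 2} (h : supp u ⊂ supp v) :
    v + u ≠ 0 ∧ Disjoint (supp u) (supp (v + u)) ∧ v = u + (v + u) := by
  have hsupp : supp (v + u) = supp v \ supp u := by
    rw [supp_add, symmDiff_of_ge h.subset]
  refine ⟨?_, ?_, ?_⟩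
  · rw [← supp_nonempty, hsupp, Finset.sdiff_nonempty]
    exact h.not_subset
  · rw [hsupp]
    exact Finset.disjoint_sdiff
  · rw [add_comm v, ← add_assoc, ZModModule.add_self, zero_add]

end Support

section Decomposable

variable {n : ℕ} {D : Set (Fin n → ZMod 2)} {v : Fin n → ZMod 2}

lemma Decomposable.supp_ssubset (h : Decomposable D v) :
    ∃ u ∈ D, u ≠ 0 ∧ supp u ⊂ supp v := by
  obtain ⟨v1, v2, hv1D, -, hv1, hv2, hdisj, rfl⟩ := h
  exact ⟨v1, hv1D, hv1, supp_ssubset_supp_add hdisj hv2⟩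

lemma Decomposable.ne_zero (h : Decomposable D v) : v ≠ 0 := by
  obtain ⟨u, -, hu, hss⟩ := h.supp_ssubset
  exact supp_nonempty.1 ((supp_nonempty.2 hu).mono hss.subset)

lemma Decomposable.not_isZeroNeighbor (h : Decomposable D v) : ¬ IsZeroNeighbor D v := by
  obtain ⟨u, huD, hu, hss⟩ := h.supp_ssubset
  exact fun hv => hv.2.2 u huD hu hss

end Decomposable

section Extension

variable {n : ℕ}

lemma extVec_injective : Function.Injective (extVec (n := n)) := fun u v h =>
  funext fun j => by simpa [extVec] using congrFun h (Fin.castSucc j)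

@[simp] lemma extVec_eq_zero_iff {v : Fin n → ZMod 2} : extVec v = 0 ↔ v = 0 := by
  refine ⟨fun h => extVec_injective (h.trans ?_), fun h => ?_⟩ <;>
    funext j <;> induction j using Fin.lastCases <;> simp_all [extVec]

lemma castSucc_mem_supp_extVec {v : Fin n → ZMod 2} {j : Fin n} :
    Fin.castSucc j ∈ supp (extVec v) ↔ j ∈ supp v := by
  simp [mem_supp, extVec]

lemma last_mem_supp_extVec {v : Fin n → ZMod 2} :
    Fin.last n ∈ supp (extVec v) ↔ Odd (wt v) := by
  simp [mem_supp, extVec, sum_eq_wt, ZMod.natCast_ne_zero_iff_odd]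

lemma supp_extVec_subset_iff {u v : Fin n → ZMod 2} :
    supp (extVec u) ⊆ supp (extVec v) ↔ supp u ⊆ supp v ∧ (Odd (wt u) → Odd (wt v)) := by
  simp only [Finset.subset_iff, Fin.forall_fin_succ', castSucc_mem_supp_extVec,
    last_mem_supp_extVec]

lemma supp_extVec_ssubset_iff {u v : Fin n → ZMod 2} :
    supp (extVec u) ⊂ supp (extVec v) ↔ supp u ⊂ supp v ∧ (Odd (wt u) → Odd (wt v)) := by
  simp only [Finset.ssubset_def, supp_extVec_subset_iff]
  refine ⟨fun ⟨⟨huv, hodd⟩, hne⟩ => ⟨⟨huv, fun hvu => hne ⟨hvu, ?_⟩⟩, hodd⟩,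
    fun ⟨⟨huv, hne⟩, hodd⟩ => ⟨⟨huv, hodd⟩, fun h => hne h.1⟩⟩
  rw [wt, wt, Finset.Subset.antisymm huv hvu]
  exact id

lemma wt_extVec (v : Fin n → ZMod 2) : wt (extVec v) = wt v + if Odd (wt v) then 1 else 0 := by
  rw [wt, supp, Finset.card_filter, Fin.sum_univ_castSucc]
  simp only [extVec, Fin.snoc_castSucc, Fin.snoc_last, sum_eq_wt, ZMod.natCast_ne_zero_iff_odd]
  rw [wt, supp, Finset.card_filter]

lemma wt_extVec_eq_two_mul_iff {i : ℕ} {v : Fin n → ZMod 2} :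
    wt (extVec v) = 2 * i ↔ wt v = 2 * i ∨ wt v + 1 = 2 * i := by
  rcases Nat.even_or_odd' (wt v) with ⟨k, hk | hk⟩ <;>
    simp [wt_extVec, hk, Nat.odd_iff] <;> omega

end Extension

section ZeroNeighbor

variable {n : ℕ} {C : Submodule (ZMod 2) (Fin n → ZMod 2)} {v : Fin n → ZMod 2}

lemma isZeroNeighbor_extCode_extVec_iff_forall :
    IsZeroNeighbor (extCode C) (extVec v) ↔
      v ∈ C ∧ v ≠ 0 ∧ ∀ u ∈ C, u ≠ 0 → supp u ⊂ supp v → Odd (wt u) ∧ Even (wt v) := by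
  simp only [IsZeroNeighbor, extCode, extVec_injective.mem_set_image, Set.forall_mem_image,
    ne_eq, extVec_eq_zero_iff, supp_extVec_ssubset_iff, not_and, Classical.not_imp,
    Nat.not_odd_iff_even, SetLike.mem_coe]

lemma isZeroNeighbor_or_onlyOddDecomposable_iff (hvC : v ∈ C) (hv : v ≠ 0) :
    IsZeroNeighbor C v ∨ OnlyOddDecomposable C v ↔
      ∀ u ∈ C, u ≠ 0 → supp u ⊂ supp v → Odd (wt u) ∧ Even (wt v) := by
  constructor
  · rintro (hzn | ⟨heven, -, hodd⟩) u huC hu hss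
    · exact absurd hss (hzn.2.2 u huC hu)
    · obtain ⟨hvu, hdisj, hsplit⟩ := disjoint_split_of_supp_ssubset hss
      exact ⟨(hodd u (v + u) huC (C.add_mem hvC huC) hu hvu hdisj hsplit).1, heven⟩
  · intro h
    by_cases hex : ∃ u ∈ C, u ≠ 0 ∧ supp u ⊂ supp v
    swap
    · exact Or.inl ⟨hvC, hv, fun u huC hu hss => hex ⟨u, huC, hu, hss⟩⟩
    obtain ⟨u, huC, hu, hss⟩ := hex
    obtain ⟨hvu, hdisj, hsplit⟩ := disjoint_split_of_supp_ssubset hss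
    refine Or.inr ⟨(h u huC hu hss).2,
      ⟨u, v + u, huC, C.add_mem hvC huC, hu, hvu, hdisj, hsplit⟩, ?_⟩
    rintro v1 v2 hv1C hv2C hv1 hv2 hdisj12 rfl
    have hss2 : supp v2 ⊂ supp (v1 + v2) :=
      add_comm v2 v1 ▸ supp_ssubset_supp_add hdisj12.symm hv1
    exact ⟨(h v1 hv1C hv1 (supp_ssubset_supp_add hdisj12 hv2)).1, (h v2 hv2C hv2 hss2).1⟩

lemma isZeroNeighbor_extCode_extVec_iff :
    IsZeroNeighbor (extCode C) (extVec v) ↔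
      v ∈ C ∧ (IsZeroNeighbor C v ∨ OnlyOddDecomposable C v) := by
  rw [isZeroNeighbor_extCode_extVec_iff_forall]
  constructor
  · rintro ⟨hvC, hv, h⟩
    exact ⟨hvC, (isZeroNeighbor_or_onlyOddDecomposable_iff hvC hv).2 h⟩
  · rintro ⟨hvC, h⟩
    have hv : v ≠ 0 := h.elim (·.2.1) (·.2.1.ne_zero)
    exact ⟨hvC, hv, (isZeroNeighbor_or_onlyOddDecomposable_iff hvC hv).1 h⟩

end ZeroNeighbor

lemma preimage_extVec_zeroNeighbors_two_mul {n : ℕ} (C : Submodule (ZMod 2) (Fin n → ZMod 2))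
    (i : ℕ) :
    extVec ⁻¹' {w | IsZeroNeighbor (extCode C) w ∧ wt w = 2 * i} =
      {v | IsZeroNeighbor (C : Set (Fin n → ZMod 2)) v ∧ wt v = 2 * i - 1} ∪
        {v | IsZeroNeighbor (C : Set (Fin n → ZMod 2)) v ∧ wt v = 2 * i} ∪
        {v | v ∈ C ∧ OnlyOddDecomposable C v ∧ wt v = 2 * i} := by
  ext v
  simp only [Set.mem_preimage, Set.mem_ofPred_eq, Set.mem_union,
    isZeroNeighbor_extCode_extVec_iff, wt_extVec_eq_two_mul_iff]
  constructor
  · rintro ⟨⟨hvC, hv | hv⟩, hw | hw⟩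
    · exact Or.inl (Or.inr ⟨hv, hw⟩)
    · exact Or.inl (Or.inl ⟨hv, by omega⟩)
    · exact Or.inr ⟨hvC, hv, hw⟩
    · exact absurd hv.1 (by rw [Nat.even_iff]; omega)
  · rintro ((⟨hv, hw⟩ | ⟨hv, hw⟩) | ⟨hvC, hv, hw⟩)
    · have hpos : 0 < wt v := wt_pos.2 hv.2.1
      exact ⟨⟨hv.1, Or.inl hv⟩, Or.inr (by omega)⟩
    · exact ⟨⟨hv.1, Or.inl hv⟩, Or.inl hw⟩
    · exact ⟨⟨hvC, Or.inr hv⟩, Or.inl hw⟩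

theorem lwd_extCode_eq_general {n : ℕ}
    (C : Submodule (ZMod 2) (Fin n → ZMod 2)) (i : ℕ) :
    Lw (extCode C) (2 * i) =
      Lw (C : Set (Fin n → ZMod 2)) (2 * i - 1) +
        Lw (C : Set (Fin n → ZMod 2)) (2 * i) + Nw C (2 * i) := by
  have hrange : {w | IsZeroNeighbor (extCode C) w ∧ wt w = 2 * i} ⊆ Set.range extVec :=
    fun w hw => Set.image_subset_range _ _ hw.1.1
  have hodd_even : Disjoint {v | IsZeroNeighbor (C : Set (Fin n → ZMod 2)) v ∧ wt v = 2 * i - 1}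
      {v | IsZeroNeighbor (C : Set (Fin n → ZMod 2)) v ∧ wt v = 2 * i} := by
    rw [Set.disjoint_left]
    rintro v ⟨hv, hw⟩ ⟨-, hw'⟩
    have hpos : 0 < wt v := wt_pos.2 hv.2.1
    omega
  have hzn_ood : Disjoint ({v | IsZeroNeighbor (C : Set (Fin n → ZMod 2)) v ∧ wt v = 2 * i - 1} ∪
      {v | IsZeroNeighbor (C : Set (Fin n → ZMod 2)) v ∧ wt v = 2 * i})
      {v | v ∈ C ∧ OnlyOddDecomposable C v ∧ wt v = 2 * i} := by
    rw [Set.disjoint_left]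
    rintro v (⟨hv, -⟩ | ⟨hv, -⟩) ⟨-, hood, -⟩ <;> exact hood.2.1.not_isZeroNeighbor hv
  rw [Lw, ← Set.image_preimage_eq_of_subset hrange,
    Set.ncard_image_of_injective _ extVec_injective, preimage_extVec_zeroNeighbors_two_mul,
    Set.ncard_union_eq hzn_ood, Set.ncard_union_eq hodd_even]
  rfl

theorem lwd_extCode_eq {n : ℕ}
    (C : Submodule (ZMod 2) (Fin n → ZMod 2)) (i : ℕ) (hi : i ≤ n / 2) :
    Lw (extCode C) (2 * i) =
      Lw (C : Set (Fin n → ZMod 2)) (2 * i - 1) +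
        Lw (C : Set (Fin n → ZMod 2)) (2 * i) + Nw C (2 * i) :=
  lwd_extCode_eq_general C i
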